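/- Suppose φ is Sturmian and let x, y ∈ V(T). If n ∈ Λ(x) ∩ Λ(y), then [B_n(x)] = [B_n(y)], and moreover for every ℓ ≤ n one has ℓ ∈ Λ(x) if and only if ℓ ∈ Λ(y). -/
import Mathlib


open SimpleGraph

/-- Equivalence of colored `n`-balls around `x` and `y`: a graph isomorphism between the
induced subgraphs on the balls, sending center to center and preserving the coloring. -/
def BallEquiv {V A : Type*} (T : SimpleGraph V) (φ : V → A) (n : ℕ) (x y : V) : Prop :=
  ∃ f : {v : V // T.dist x v ≤ n} ≃ {v : V // T.dist y v ≤ n},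
    ((f ⟨x, by simp [SimpleGraph.dist_self]⟩ : {v : V // T.dist y v ≤ n}) : V) = y ∧
    (∀ u w : {v : V // T.dist x v ≤ n}, T.Adj (u : V) (w : V) ↔ T.Adj (f u : V) (f w : V)) ∧
    ∀ v : {v : V // T.dist x v ≤ n}, φ (f v : V) = φ (v : V)

/-- Two vertices are in the same class if a color-preserving automorphism of `T`
sends one to the other. -/
def SameClass {V A : Type*} (T : SimpleGraph V) (φ : V → A) (x y : V) : Prop :=
  ∃ g : V ≃ V, (∀ u w : V, T.Adj (g u) (g w) ↔ T.Adj u w) ∧ g x = y ∧ ∀ v, φ (g v) = φ v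

/-- Subword complexity: the number of equivalence classes of colored `n`-balls. -/
noncomputable def ballComplexity {V A : Type*} (T : SimpleGraph V) (φ : V → A) (n : ℕ) : ℕ :=
  Nat.card (Quot (BallEquiv T φ n))

/-- A coloring is periodic if it is invariant under a subgroup of the automorphism group
of `T` having finitely many orbits on vertices. -/
def IsPeriodicColoring {V A : Type*} (T : SimpleGraph V) (φ : V → A) : Prop :=
  ∃ Γ : Subgroup (Equiv.Perm V),
    (∀ γ ∈ Γ, ∀ u w : V, T.Adj (γ u) (γ w) ↔ T.Adj u w) ∧
    (∀ γ ∈ Γ, ∀ v, φ (γ v) = φ v) ∧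
    Finite (Quot (fun x y : V => ∃ γ ∈ Γ, γ x = y))

/-- The colored `n`-ball around `x` is special. -/
def IsSpecial {V A : Type*} (T : SimpleGraph V) (φ : V → A) (n : ℕ) (x : V) : Prop :=
  ∃ y z : V, BallEquiv T φ n x y ∧ BallEquiv T φ n x z ∧ ¬ BallEquiv T φ (n + 1) y z

/-- The type set of a vertex. -/
def TypeSet {V A : Type*} (T : SimpleGraph V) (φ : V → A) (x : V) : Set ℕ :=
  {n : ℕ | IsSpecial T φ n x}

/-- The maximal type of a vertex of bounded type (`-1` if the type set is empty). -/
noncomputable def maxType {V A : Type*} (T : SimpleGraph V) (φ : V → A) (x : V) : ℤ :=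
  sSup (insert (-1) ((fun n : ℕ => (n : ℤ)) '' TypeSet T φ x))

/-- The coloring is Sturmian if its subword complexity is `n + 2`. -/
def IsSturmian {V A : Type*} (T : SimpleGraph V) (φ : V → A) : Prop :=
  ∀ n : ℕ, ballComplexity T φ n = n + 2

/-- Eventually periodic coloring. -/
def IsEventuallyPeriodic {V A : Type*} (T : SimpleGraph V) (φ : V → A) : Prop :=
  ∃ K : Set V, K.Nonempty ∧ K.Finite ∧ (T.induce K).Connected ∧
    ∀ v : (Kᶜ : Set V), ∃ ψ : V → A, IsPeriodicColoring T ψ ∧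
      ∀ w : (Kᶜ : Set V), (T.induce (Kᶜ : Set V)).Reachable v w → ψ (w : V) = φ (w : V)

/-- The vertex set of the `n`-branch from `x` towards its neighbor `x'`. -/
def branchSet {V : Type*} (T : SimpleGraph V) (n : ℕ) (x x' : V) : Set V :=
  insert x {y : V | T.dist x y ≤ n ∧ T.dist y x' < T.dist y x}

/-- Equivalence of colored `n`-branches. -/
def BranchEquiv {V A : Type*} (T : SimpleGraph V) (φ : V → A) (n : ℕ)
    (x x' y y' : V) : Prop :=
  ∃ f : (branchSet T n x x') ≃ (branchSet T n y y'),
    ((f ⟨x, Set.mem_insert x _⟩ : (branchSet T n y y')) : V) = y ∧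
    (∀ u w : (branchSet T n x x'), T.Adj (u : V) (w : V) ↔ T.Adj (f u : V) (f w : V)) ∧
    ∀ v : (branchSet T n x x'), φ (f v : V) = φ (v : V)

/-- A coloring of `K` appears exactly once if the only connected subgraph of `T`
color-isomorphic to it is `K` itself. -/
def AppearsOnce {V A : Type*} (T : SimpleGraph V) (φ : V → A) (K : Set V) : Prop :=
  ∀ K' : Set V, (T.induce K').Connected →
    (∃ f : K ≃ K', (∀ u w : K, T.Adj (u : V) (w : V) ↔ T.Adj (f u : V) (f w : V)) ∧
      ∀ v : K, φ (f v : V) = φ (v : V)) → K' = K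

section AuxLemmas

variable {V A : Type*} {T : SimpleGraph V} {φ : V → A}

lemma ballEquiv_refl (n : ℕ) (x : V) : BallEquiv T φ n x x :=
  ⟨Equiv.refl _, rfl, fun _ _ => Iff.rfl, fun _ => rfl⟩

lemma ballEquiv_symm {n : ℕ} {x y : V} (h : BallEquiv T φ n x y) : BallEquiv T φ n y x := by
  obtain ⟨f, hc, ha, hφ⟩ := h
  have hfx : f ⟨x, by simp [SimpleGraph.dist_self]⟩ = ⟨y, by simp [SimpleGraph.dist_self]⟩ :=
    Subtype.ext hc
  refine ⟨f.symm, ?_, ?_, ?_⟩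
  · rw [← hfx, Equiv.symm_apply_apply]
  · intro u w
    have := ha (f.symm u) (f.symm w)
    simpa using this.symm
  · intro v
    have := hφ (f.symm v)
    simpa using this.symm

lemma ballEquiv_trans {n : ℕ} {x y z : V} (h1 : BallEquiv T φ n x y)
    (h2 : BallEquiv T φ n y z) : BallEquiv T φ n x z := by
  obtain ⟨f, hcf, haf, hφf⟩ := h1
  obtain ⟨g, hcg, hag, hφg⟩ := h2
  have hfx : f ⟨x, by simp [SimpleGraph.dist_self]⟩ = ⟨y, by simp [SimpleGraph.dist_self]⟩ :=
    Subtype.ext hcf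
  refine ⟨f.trans g, ?_, ?_, ?_⟩
  · simp only [Equiv.trans_apply, hfx]; exact hcg
  · intro u w; exact (haf u w).trans (hag (f u) (f w))
  · intro v; exact (hφg (f v)).trans (hφf v)

lemma ballEquiv_equivalence (n : ℕ) : Equivalence (BallEquiv T φ n) :=
  ⟨ballEquiv_refl n, ballEquiv_symm, ballEquiv_trans⟩

/-- Lift a walk whose support satisfies a predicate to the comap graph. -/
lemma exists_lift_walk {P : V → Prop} :
    ∀ {a b : V} (p : T.Walk a b), (∀ u ∈ p.support, P u) →
      ∀ (ha : P a) (hb : P b),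
      ∃ q : (T.comap (Subtype.val : {v // P v} → V)).Walk ⟨a, ha⟩ ⟨b, hb⟩,
        q.length = p.length := by
  intro a b p
  induction p with
  | nil => intro _ ha hb; exact ⟨SimpleGraph.Walk.nil, rfl⟩
  | @cons u c w hadj p ih =>
      intro hsup ha hb
      have hc : P c := hsup c (by simp [SimpleGraph.Walk.support_cons])
      obtain ⟨q, hq⟩ := ih (fun v hv => hsup v (by simp [SimpleGraph.Walk.support_cons, hv])) hc hb
      have hadj' : (T.comap (Subtype.val : {v // P v} → V)).Adj ⟨u, ha⟩ ⟨c, hc⟩ := hadj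
      exact ⟨SimpleGraph.Walk.cons hadj' q, by simp [hq]⟩

/-- The hom from a comap graph back to the original graph. -/
def comapHom {P : V → Prop} : T.comap (Subtype.val : {v // P v} → V) →g T :=
  ⟨Subtype.val, fun h => h⟩

lemma dist_comap_center (hc : T.Connected) (m : ℕ) (x : V)
    (v : {v // T.dist x v ≤ m}) :
    (T.comap (Subtype.val : {v // T.dist x v ≤ m} → V)).dist
      ⟨x, by simp [SimpleGraph.dist_self]⟩ v = T.dist x v := by
  haveI := Classical.decEq V
  obtain ⟨p, hp⟩ := (hc x v).exists_walk_length_eq_dist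
  have hsup : ∀ u ∈ p.support, T.dist x u ≤ m := by
    intro u hu
    calc T.dist x u ≤ (p.takeUntil u hu).length := SimpleGraph.dist_le _
      _ ≤ p.length := SimpleGraph.Walk.length_takeUntil_le p hu
      _ ≤ m := by rw [hp]; exact v.2
  obtain ⟨q, hq⟩ := exists_lift_walk p hsup (by simp [SimpleGraph.dist_self]) v.2
  apply le_antisymm
  · calc (T.comap _).dist _ v ≤ q.length := SimpleGraph.dist_le q
      _ = p.length := hq
      _ = T.dist x v := hp
  · have hreach : (T.comap (Subtype.val : {v // T.dist x v ≤ m} → V)).Reachable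
        ⟨x, by simp [SimpleGraph.dist_self]⟩ v := ⟨q⟩
    obtain ⟨r, hr⟩ := hreach.exists_walk_length_eq_dist
    calc T.dist x v ≤ (r.map comapHom).length := SimpleGraph.dist_le _
      _ = r.length := SimpleGraph.Walk.length_map _ _
      _ = _ := hr

lemma ballEquiv_dist_le (hc : T.Connected) {m : ℕ} {x y : V}
    (f : {v : V // T.dist x v ≤ m} ≃ {v : V // T.dist y v ≤ m})
    (hcen : ((f ⟨x, by simp [SimpleGraph.dist_self]⟩ : {v : V // T.dist y v ≤ m}) : V) = y)
    (hadj : ∀ u w : {v : V // T.dist x v ≤ m},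
      T.Adj (u : V) (w : V) ↔ T.Adj (f u : V) (f w : V))
    (v : {v : V // T.dist x v ≤ m}) :
    T.dist y (f v) ≤ T.dist x v := by
  haveI := Classical.decEq V
  have hfx : f ⟨x, by simp [SimpleGraph.dist_self]⟩ =
      ⟨y, by simp [SimpleGraph.dist_self]⟩ := Subtype.ext hcen
  -- hom from comap ball at x to comap ball at y
  let F : T.comap (Subtype.val : {v // T.dist x v ≤ m} → V) →g
      T.comap (Subtype.val : {v // T.dist y v ≤ m} → V) :=
    ⟨f, fun {u w} h => (hadj u w).mp h⟩
  rw [← dist_comap_center hc m x v, ← dist_comap_center hc m y (f v)]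
  have hreach : (T.comap (Subtype.val : {v // T.dist x v ≤ m} → V)).Reachable
      ⟨x, by simp [SimpleGraph.dist_self]⟩ v := by
    obtain ⟨p, hp⟩ := (hc x v).exists_walk_length_eq_dist
    have hsup : ∀ u ∈ p.support, T.dist x u ≤ m := by
      intro u hu
      calc T.dist x u ≤ (p.takeUntil u hu).length := SimpleGraph.dist_le _
        _ ≤ p.length := SimpleGraph.Walk.length_takeUntil_le p hu
        _ ≤ m := by rw [hp]; exact v.2
    obtain ⟨q, _⟩ := exists_lift_walk p hsup (by simp [SimpleGraph.dist_self]) v.2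
    exact ⟨q⟩
  obtain ⟨q, hq⟩ := hreach.exists_walk_length_eq_dist
  exact (SimpleGraph.dist_le ((q.map F).copy (by exact hfx) (by rfl))).trans
    (le_of_eq (by rw [SimpleGraph.Walk.length_copy, SimpleGraph.Walk.length_map, hq]))

lemma ballEquiv_dist_eq (hc : T.Connected) {m : ℕ} {x y : V}
    (f : {v : V // T.dist x v ≤ m} ≃ {v : V // T.dist y v ≤ m})
    (hcen : ((f ⟨x, by simp [SimpleGraph.dist_self]⟩ : {v : V // T.dist y v ≤ m}) : V) = y)
    (hadj : ∀ u w : {v : V // T.dist x v ≤ m},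
      T.Adj (u : V) (w : V) ↔ T.Adj (f u : V) (f w : V))
    (v : {v : V // T.dist x v ≤ m}) :
    T.dist y (f v) = T.dist x v := by
  refine le_antisymm (ballEquiv_dist_le hc f hcen hadj v) ?_
  have hfx : f ⟨x, by simp [SimpleGraph.dist_self]⟩ =
      ⟨y, by simp [SimpleGraph.dist_self]⟩ := Subtype.ext hcen
  have hcen' : ((f.symm ⟨y, by simp [SimpleGraph.dist_self]⟩ :
      {v : V // T.dist x v ≤ m}) : V) = x := by
    rw [← hfx, Equiv.symm_apply_apply]
  have hadj' : ∀ u w : {v : V // T.dist y v ≤ m},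
      T.Adj (u : V) (w : V) ↔ T.Adj (f.symm u : V) (f.symm w : V) := by
    intro u w
    have := hadj (f.symm u) (f.symm w)
    simpa using this.symm
  have := ballEquiv_dist_le hc f.symm hcen' hadj' (f v)
  simpa using this

lemma ballEquiv_of_succ (hc : T.Connected) {n : ℕ} {x y : V}
    (h : BallEquiv T φ (n + 1) x y) : BallEquiv T φ n x y := by
  obtain ⟨f, hcen, hadj, hφ⟩ := h
  have hd := ballEquiv_dist_eq hc f hcen hadj
  have hd' : ∀ w : {v : V // T.dist y v ≤ n + 1},
      T.dist x (f.symm w) = T.dist y w := by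
    intro w
    have := hd (f.symm w)
    simpa using this.symm
  refine ⟨{
      toFun := fun v => ⟨(f ⟨v, v.2.trans (Nat.le_succ n)⟩ : V), by
        rw [hd]; exact v.2⟩
      invFun := fun w => ⟨(f.symm ⟨w, w.2.trans (Nat.le_succ n)⟩ : V), by
        rw [hd']; exact w.2⟩
      left_inv := by
        intro v
        apply Subtype.ext
        simp
      right_inv := by
        intro w
        apply Subtype.ext
        simp }, ?_, ?_, ?_⟩
  · exact hcen
  · intro u w
    exact hadj ⟨u.1, u.2.trans (Nat.le_succ n)⟩ ⟨w.1, w.2.trans (Nat.le_succ n)⟩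
  · intro v
    exact hφ ⟨v.1, v.2.trans (Nat.le_succ n)⟩

lemma ballEquiv_of_le (hc : T.Connected) {l m : ℕ} {x y : V} (hlm : l ≤ m)
    (h : BallEquiv T φ m x y) : BallEquiv T φ l x y := by
  induction m with
  | zero => obtain rfl : l = 0 := Nat.le_zero.mp hlm; exact h
  | succ m ih =>
      rcases Nat.lt_or_ge l (m + 1) with hl | hl
      · exact ih (Nat.lt_succ_iff.mp hl) (ballEquiv_of_succ hc h)
      · obtain rfl : l = m + 1 := le_antisymm hlm hl
        exact h

lemma quot_mk_eq_iff (n : ℕ) (a b : V) :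
    Quot.mk (BallEquiv T φ n) a = Quot.mk (BallEquiv T φ n) b ↔ BallEquiv T φ n a b :=
  Quot.eq.trans (ballEquiv_equivalence n).eqvGen_iff

lemma special_unique (hc : T.Connected) (hst : IsSturmian T φ) (n : ℕ) {x y : V}
    (hx : IsSpecial T φ n x) (hy : IsSpecial T φ n y) : BallEquiv T φ n x y := by
  classical
  by_contra hxy
  have hstn := hst n
  have hstn1 := hst (n + 1)
  unfold ballComplexity at hstn hstn1
  have hfinQ : Finite (Quot (BallEquiv T φ n)) :=
    (Nat.card_pos_iff.mp (by rw [hstn]; omega)).2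
  have hfinQs : Finite (Quot (BallEquiv T φ (n + 1))) :=
    (Nat.card_pos_iff.mp (by rw [hstn1]; omega)).2
  haveI := Fintype.ofFinite (Quot (BallEquiv T φ n))
  haveI := Fintype.ofFinite (Quot (BallEquiv T φ (n + 1)))
  set F : Quot (BallEquiv T φ (n + 1)) → Quot (BallEquiv T φ n) :=
    Quot.lift (Quot.mk _) (fun a b hab => Quot.sound (ballEquiv_of_succ hc hab)) with hF
  have hFmk : ∀ v : V, F (Quot.mk _ v) = Quot.mk _ v := fun v => rfl
  have hsurj : Function.Surjective F := by
    intro q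
    induction q using Quot.ind with
    | _ v => exact ⟨Quot.mk _ v, rfl⟩
  -- fibers
  have hfiber2 : ∀ z : V, IsSpecial T φ n z →
      2 ≤ Fintype.card {b // F b = Quot.mk (BallEquiv T φ n) z} := by
    intro z hz
    obtain ⟨u, v, hzu, hzv, huv⟩ := hz
    have hu : F (Quot.mk _ u) = Quot.mk (BallEquiv T φ n) z := by
      rw [hFmk, quot_mk_eq_iff]; exact ballEquiv_symm hzu
    have hv : F (Quot.mk _ v) = Quot.mk (BallEquiv T φ n) z := by
      rw [hFmk, quot_mk_eq_iff]; exact ballEquiv_symm hzv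
    have hne : (⟨Quot.mk _ u, hu⟩ : {b // F b = Quot.mk (BallEquiv T φ n) z}) ≠
        ⟨Quot.mk _ v, hv⟩ := by
      intro hcontra
      apply huv
      have := congrArg Subtype.val hcontra
      rwa [quot_mk_eq_iff] at this
    exact Fintype.one_lt_card_iff.mpr ⟨_, _, hne⟩
  have hfiber1 : ∀ q : Quot (BallEquiv T φ n),
      1 ≤ Fintype.card {b // F b = q} := by
    intro q
    obtain ⟨b, hb⟩ := hsurj q
    exact Fintype.card_pos_iff.mpr ⟨⟨b, hb⟩⟩
  have hmkne : Quot.mk (BallEquiv T φ n) x ≠ Quot.mk (BallEquiv T φ n) y := by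
    rw [Ne, quot_mk_eq_iff]; exact hxy
  -- counting
  have hcard : Fintype.card (Quot (BallEquiv T φ (n + 1))) =
      ∑ q : Quot (BallEquiv T φ n), Fintype.card {b // F b = q} := by
    rw [← Fintype.card_sigma]
    exact Fintype.card_congr (Equiv.sigmaFiberEquiv F).symm
  set s : Finset (Quot (BallEquiv T φ n)) :=
    {Quot.mk (BallEquiv T φ n) x, Quot.mk (BallEquiv T φ n) y} with hs
  have hsum_s : 4 ≤ ∑ q ∈ s, Fintype.card {b // F b = q} := by
    rw [hs, Finset.sum_pair hmkne]
    have h1 := hfiber2 x hx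
    have h2 := hfiber2 y hy
    omega
  have hsum_rest : (Finset.univ \ s).card ≤
      ∑ q ∈ Finset.univ \ s, Fintype.card {b // F b = q} := by
    calc (Finset.univ \ s).card = ∑ _q ∈ Finset.univ \ s, 1 := by
          rw [Finset.sum_const, smul_eq_mul, mul_one]
      _ ≤ _ := Finset.sum_le_sum (fun q _ => hfiber1 q)
  have hcards : s.card = 2 := by
    rw [hs, Finset.card_pair hmkne]
  have hsplit : ∑ q ∈ Finset.univ \ s, Fintype.card {b // F b = q} +
      ∑ q ∈ s, Fintype.card {b // F b = q} =
      ∑ q : Quot (BallEquiv T φ n), Fintype.card {b // F b = q} :=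
    Finset.sum_sdiff (Finset.subset_univ s)
  have hcardQ : Fintype.card (Quot (BallEquiv T φ n)) = n + 2 := by
    rw [← Nat.card_eq_fintype_card]; exact hstn
  have hcardQs : Fintype.card (Quot (BallEquiv T φ (n + 1))) = n + 3 := by
    rw [← Nat.card_eq_fintype_card]; exact hstn1
  have hsdcard : (Finset.univ \ s).card = n := by
    rw [Finset.card_sdiff_of_subset (Finset.subset_univ s), Finset.card_univ, hcardQ, hcards]
    omega
  omega

end AuxLemmas

theorem stmt_17 {V A : Type*} (T : SimpleGraph V) (φ : V → A) (k : ℕ)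
    (hk : 2 ≤ k) (htree : T.IsTree) (hreg : ∀ v : V, (T.neighborSet v).ncard = k)
    (hst : IsSturmian T φ) (x y : V) (n : ℕ)
    (hx : n ∈ TypeSet T φ x) (hy : n ∈ TypeSet T φ y) :
    BallEquiv T φ n x y ∧
    ∀ l : ℕ, l ≤ n → (l ∈ TypeSet T φ x ↔ l ∈ TypeSet T φ y) := by
  have hc : T.Connected := htree.isConnected
  have h1 : BallEquiv T φ n x y := special_unique hc hst n hx hy
  refine ⟨h1, ?_⟩
  intro l hl
  have hl' : BallEquiv T φ l x y := ballEquiv_of_le hc hl h1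
  constructor
  · rintro ⟨u, v, hxu, hxv, huv⟩
    exact ⟨u, v, ballEquiv_trans (ballEquiv_symm hl') hxu,
      ballEquiv_trans (ballEquiv_symm hl') hxv, huv⟩
  · rintro ⟨u, v, hyu, hyv, huv⟩
    exact ⟨u, v, ballEquiv_trans hl' hyu, ballEquiv_trans hl' hyv, huv⟩
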